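/- arXiv:1901.07084 — 8 statements merged into one kernel-verified Lean document; each statement's English description precedes it below -/
import Mathlib

section
/- Let A : ℝⁿ → ℝᵐ be a linear map, D ⊆ ℝᵐ a nonempty closed convex set, and D_* := { y ∈ ℝᵐ : ⟨y, h⟩ ≤ 0 for all h in the recession cone of D }. If there exists y ∈ D_* with Aᵀ y = 0 and sup_{z ∈ D} ⟨y, z⟩ = −1, then dist(range A, D) > 0. -/
open scoped RealInnerProductSpace

/-- The recession cone of a set `D`. -/
def recCone {m : ℕ} (D : Set (EuclideanSpace ℝ (Fin m))) : Set (EuclideanSpace ℝ (Fin m)) :=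
  {h | ∀ z ∈ D, ∀ t : ℝ, 0 ≤ t → z + t • h ∈ D}

/-- if some `y ∈ D_*` has `Aᵀ y = 0` and support value `−1` on `D`,
then `dist(range A, D) > 0`. -/
theorem stmt2 {n m : ℕ}
    (A : EuclideanSpace ℝ (Fin n) →L[ℝ] EuclideanSpace ℝ (Fin m))
    (D : Set (EuclideanSpace ℝ (Fin m))) (hDne : D.Nonempty)
    (hDclosed : IsClosed D) (hDconv : Convex ℝ D)
    (y : EuclideanSpace ℝ (Fin m))
    (hyD : y ∈ {v : EuclideanSpace ℝ (Fin m) | ∀ h ∈ recCone D, ⟪v, h⟫ ≤ 0})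
    (hAy : ContinuousLinearMap.adjoint A y = 0)
    (hsup : sSup ((fun z => ⟪y, z⟫) '' D) = -1) :
    0 < sInf (Set.image2 dist (Set.range A) D) := by
  -- The set of inner products is bounded above (else sSup would be 0 ≠ -1)
  have hbdd : BddAbove ((fun z => ⟪y, z⟫) '' D) := by
    by_contra hb
    rw [Real.sSup_of_not_bddAbove hb] at hsup
    norm_num at hsup
  -- Every z ∈ D has ⟪y, z⟫ ≤ -1
  have hle : ∀ z ∈ D, ⟪y, z⟫ ≤ -1 := by
    intro z hz
    have := le_csSup hbdd (Set.mem_image_of_mem _ hz)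
    rwa [hsup] at this
  -- y ≠ 0
  have hy0 : y ≠ 0 := by
    rintro rfl
    obtain ⟨z, hz⟩ := hDne
    have := hle z hz
    simp [inner_zero_left] at this
    linarith
  have hyn : 0 < ‖y‖ := norm_pos_iff.mpr hy0
  -- every distance is at least 1/‖y‖
  have key : ∀ d ∈ Set.image2 dist (Set.range A) D, 1 / ‖y‖ ≤ d := by
    rintro d ⟨u, ⟨x, rfl⟩, z, hz, rfl⟩
    have h1 : ⟪y, A x⟫ = 0 := by
      rw [← ContinuousLinearMap.adjoint_inner_left, hAy, inner_zero_left]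
    have h2 : (1 : ℝ) ≤ ⟪y, A x - z⟫ := by
      rw [inner_sub_right, h1]
      have := hle z hz; linarith
    have h3 : ⟪y, A x - z⟫ ≤ ‖y‖ * ‖A x - z‖ := real_inner_le_norm y _
    have h4 : (1 : ℝ) ≤ ‖y‖ * ‖A x - z‖ := le_trans h2 h3
    rw [dist_eq_norm, div_le_iff₀ hyn]
    linarith [mul_comm ‖y‖ ‖A x - z‖]
  have hne : (Set.image2 dist (Set.range A) D).Nonempty := by
    obtain ⟨z, hz⟩ := hDne
    exact ⟨dist (A 0) z, Set.mem_image2_of_mem ⟨0, rfl⟩ hz⟩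
  have := le_csInf hne key
  have h0 : (0 : ℝ) < 1 / ‖y‖ := by positivity
  linarith
end

section
/- Let A : ℝⁿ → ℝᵐ be a linear map, D ⊆ ℝᵐ a nonempty closed convex set. If dist(range A, D) > 0, then there exists y in D_* := { y : ⟨y, h⟩ ≤ 0 ∀ h ∈ rec(D) } such that Aᵀ y = 0 and sup_{z ∈ D} ⟨y, z⟩ = −1. -/
open scoped RealInnerProductSpace

private lemma aux_forall_mul_le {a C : ℝ} (h : ∀ t : ℝ, t * a ≤ C) : a = 0 := by
  by_contra ha
  have := h ((C + 1) / a)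
  rw [div_mul_cancel₀ _ ha] at this
  linarith

private lemma aux_forall_nonneg_mul_le {a C : ℝ} (h : ∀ t : ℝ, 0 ≤ t → t * a ≤ C) : a ≤ 0 := by
  by_contra ha
  push_neg at ha
  have := h ((|C| + 1) / a) (by positivity)
  rw [div_mul_cancel₀ _ (ne_of_gt ha)] at this
  have := le_abs_self C
  linarith

/-- if `dist(range A, D) > 0` then there is a certificate
`y ∈ D_*` with `Aᵀ y = 0` and `sup_{z ∈ D} ⟨y, z⟩ = −1`. -/
theorem stmt3 {n m : ℕ}
    (A : EuclideanSpace ℝ (Fin n) →L[ℝ] EuclideanSpace ℝ (Fin m))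
    (D : Set (EuclideanSpace ℝ (Fin m))) (hDne : D.Nonempty)
    (hDclosed : IsClosed D) (hDconv : Convex ℝ D)
    (hdist : 0 < sInf (Set.image2 dist (Set.range A) D)) :
    ∃ y : EuclideanSpace ℝ (Fin m),
      (∀ h ∈ recCone D, ⟪y, h⟫ ≤ 0) ∧
      ContinuousLinearMap.adjoint A y = 0 ∧
      sSup ((fun z => ⟪y, z⟫) '' D) = -1 := by
  set δ := sInf (Set.image2 dist (Set.range A) D) with hδ
  set S : Set (EuclideanSpace ℝ (Fin m)) := Set.image2 (· - ·) D (Set.range A) with hS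
  have hrange : Convex ℝ (Set.range (A : EuclideanSpace ℝ (Fin n) → EuclideanSpace ℝ (Fin m))) := by
    have := (LinearMap.range (A : EuclideanSpace ℝ (Fin n) →ₗ[ℝ] EuclideanSpace ℝ (Fin m))).convex
    rwa [LinearMap.coe_range] at this
  have hSconv : Convex ℝ S := hDconv.sub hrange
  have hdistmem : ∀ u ∈ S, δ ≤ ‖u‖ := by
    rintro u ⟨z, hz, w, ⟨x, rfl⟩, rfl⟩
    have : δ ≤ dist (A x) z := csInf_le ⟨0, by rintro r ⟨a, _, b, _, rfl⟩; exact dist_nonneg⟩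
      ⟨A x, Set.mem_range_self x, z, hz, rfl⟩
    rwa [dist_eq_norm, ← norm_neg, neg_sub] at this
  have h0 : (0 : EuclideanSpace ℝ (Fin m)) ∉ closure S := by
    intro h0
    have : ∀ u ∈ closure S, δ ≤ ‖u‖ :=
      fun u hu => le_on_closure (fun v hv => hdistmem v hv) continuousOn_const
        continuous_norm.continuousOn hu
    have := this 0 h0
    simp at this
    linarith
  obtain ⟨f, u, hfu, hub⟩ := geometric_hahn_banach_point_closed (hSconv.closure) isClosed_closure h0
  have hf0 : f 0 = 0 := map_zero f
  have hu : 0 < u := by rw [hf0] at hfu; exact hfu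
  have hfA : ∀ x, f (A x) = 0 := by
    intro x
    obtain ⟨z₀, hz₀⟩ := hDne
    refine aux_forall_mul_le (C := f z₀ - u) (fun t => ?_)
    have hmem : z₀ - A (t • x) ∈ S := ⟨z₀, hz₀, A (t • x), Set.mem_range_self _, rfl⟩
    have := hub _ (subset_closure hmem)
    rw [map_sub, A.map_smul, f.map_smul, smul_eq_mul] at this
    linarith
  have hfD : ∀ z ∈ D, u < f z := by
    intro z hz
    have hmem : z - A 0 ∈ S := ⟨z, hz, A 0, Set.mem_range_self _, rfl⟩
    have := hub _ (subset_closure hmem)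
    rw [map_sub, map_zero, f.map_zero] at this
    linarith
  set sD := sInf (f '' D) with hsD
  have hbdd : BddBelow (f '' D) := ⟨u, by rintro r ⟨z, hz, rfl⟩; exact (hfD z hz).le⟩
  have hsDpos : u ≤ sD := le_csInf (hDne.image f) (by rintro r ⟨z, hz, rfl⟩; exact (hfD z hz).le)
  have hsD0 : 0 < sD := lt_of_lt_of_le hu hsDpos
  have hinv : 0 < 1 / sD := one_div_pos.mpr hsD0
  have hone : (1 / sD) * sD = 1 := one_div_mul_cancel (ne_of_gt hsD0)
  set y' := (InnerProductSpace.toDual ℝ (EuclideanSpace ℝ (Fin m))).symm f with hy'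
  have hy'ap : ∀ x, ⟪y', x⟫ = f x := fun x => InnerProductSpace.toDual_symm_apply
  -- key upper bound
  have hkey : ∀ w ∈ D, ⟪(-(1 / sD)) • y', w⟫ ≤ -1 := by
    intro w hw
    have hfz : sD ≤ f w := csInf_le hbdd ⟨w, hw, rfl⟩
    rw [real_inner_smul_left, hy'ap]
    nlinarith [mul_le_mul_of_nonneg_left hfz hinv.le]
  refine ⟨(-(1 / sD)) • y', ?_, ?_, ?_⟩
  · intro h hh
    obtain ⟨z₀, hz₀⟩ := hDne
    refine aux_forall_nonneg_mul_le (C := -1 - ⟪(-(1 / sD)) • y', z₀⟫) (fun t ht => ?_)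
    have hle := hkey _ (hh z₀ hz₀ t ht)
    rw [inner_add_right, real_inner_smul_right] at hle
    linarith
  · have hall : ∀ x, ⟪ContinuousLinearMap.adjoint A ((-(1 / sD)) • y'), x⟫ = 0 := by
      intro x
      rw [ContinuousLinearMap.adjoint_inner_left, real_inner_smul_left, hy'ap, hfA]
      ring
    have h2 := hall (ContinuousLinearMap.adjoint A ((-(1 / sD)) • y'))
    rwa [real_inner_self_eq_norm_sq, pow_eq_zero_iff (by norm_num), norm_eq_zero] at h2
  · have hlub : IsLUB ((fun z => ⟪(-(1 / sD)) • y', z⟫) '' D) (-1) := by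
      constructor
      · rintro r ⟨z, hz, rfl⟩
        exact hkey z hz
      · intro b hb
        have hlb : ∀ z ∈ D, -b * sD ≤ f z := by
          intro z hz
          have h3 := hb ⟨z, hz, rfl⟩
          simp only [real_inner_smul_left, hy'ap] at h3
          have h5 : sD * (-(1 / sD) * f z) ≤ sD * b := mul_le_mul_of_nonneg_left h3 hsD0.le
          have h6 : sD * (-(1 / sD) * f z) = -f z := by field_simp
          nlinarith
        have h4 : -b * sD ≤ sD := le_csInf (hDne.image f)
          (by rintro r ⟨z, hz, rfl⟩; exact hlb z hz)
        nlinarith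
    exact hlub.csSup_eq (hDne.image _)
end

section
/- Let A : ℝⁿ → ℝᵐ be a linear map, D ⊆ ℝᵐ a closed convex set, c ∈ ℝⁿ, and D_* := { y : ⟨y,h⟩ ≤ 0 ∀ h ∈ rec(D) }. If there exists h ∈ ℝⁿ with A h ∈ rec(D) and ⟨c, h⟩ < 0, then dist({ y : Aᵀ y = −c }, D_*) > 0. -/
open scoped RealInnerProductSpace ENNReal

/-- Extended distance between two sets (equal to `⊤` if one of them is empty). -/
noncomputable def setEDist {m : ℕ}
    (S T : Set (EuclideanSpace ℝ (Fin m))) : ℝ≥0∞ :=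
  ⨅ s ∈ S, ⨅ t ∈ T, edist s t

/-- if there is `h` with `A h ∈ rec(D)` and `⟨c, h⟩ < 0`, then
`dist({y : Aᵀ y = −c}, D_*) > 0`. -/
theorem stmt4 {n m : ℕ}
    (A : EuclideanSpace ℝ (Fin n) →L[ℝ] EuclideanSpace ℝ (Fin m))
    (D : Set (EuclideanSpace ℝ (Fin m))) (hDclosed : IsClosed D) (hDconv : Convex ℝ D)
    (c : EuclideanSpace ℝ (Fin n))
    (h : EuclideanSpace ℝ (Fin n)) (hh : A h ∈ recCone D) (hch : ⟪c, h⟫ < 0) :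
    0 < setEDist {y : EuclideanSpace ℝ (Fin m) | ContinuousLinearMap.adjoint A y = -c}
      {y : EuclideanSpace ℝ (Fin m) | ∀ u ∈ recCone D, ⟪y, u⟫ ≤ 0} := by
  set S := {y : EuclideanSpace ℝ (Fin m) | ContinuousLinearMap.adjoint A y = -c} with hS
  set T := {y : EuclideanSpace ℝ (Fin m) | ∀ u ∈ recCone D, ⟪y, u⟫ ≤ 0} with hT
  rcases S.eq_empty_or_nonempty with hSe | ⟨y₀, hy₀⟩
  · simp [setEDist, hSe]
  · -- A h ≠ 0
    have hkey : ∀ y ∈ S, ⟪y, A h⟫ = -⟪c, h⟫ := by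
      intro y hy
      have := ContinuousLinearMap.adjoint_inner_left A h y
      rw [hy] at this
      rw [← this, inner_neg_left]
    have hAh : A h ≠ 0 := by
      intro h0
      have := hkey y₀ hy₀
      rw [h0, inner_zero_right] at this
      linarith
    have hAhn : 0 < ‖A h‖ := norm_pos_iff.mpr hAh
    set ε : ℝ := (-⟪c, h⟫) / ‖A h‖ with hε
    have hεpos : 0 < ε := div_pos (by linarith) hAhn
    have hbound : ENNReal.ofReal ε ≤ setEDist S T := by
      refine le_iInf₂ fun y hy => le_iInf₂ fun z hz => ?_
      have h1 : ⟪y, A h⟫ = -⟪c, h⟫ := hkey y hy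
      have h2 : ⟪z, A h⟫ ≤ 0 := hz (A h) hh
      have h3 : -⟪c, h⟫ ≤ ⟪y - z, A h⟫ := by
        rw [inner_sub_left, h1]; linarith
      have h4 : ⟪y - z, A h⟫ ≤ ‖y - z‖ * ‖A h‖ := real_inner_le_norm _ _
      have h5 : ε ≤ ‖y - z‖ := by
        rw [hε, div_le_iff₀ hAhn]
        linarith
      rw [edist_dist]
      exact ENNReal.ofReal_le_ofReal (by rwa [dist_eq_norm])
    calc (0 : ℝ≥0∞) < ENNReal.ofReal ε := by simpa using hεpos
      _ ≤ _ := hbound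
end

section
/- Let A : ℝⁿ → ℝᵐ be an injective linear map, D ⊆ ℝᵐ a closed convex set with nonempty interior such that {x : A x ∈ D} is nonempty, c ∈ ℝⁿ, and D_* := { y : ⟨y,h⟩ ≤ 0 ∀ h ∈ rec(D) }. If dist({ y : Aᵀ y = −c }, D_*) > 0, then there exists h ∈ ℝⁿ with A h ∈ rec(D) and ⟨c, h⟩ < 0. -/
open scoped RealInnerProductSpace ENNReal

/-!
Let `K = rec(D)`, a closed convex cone, and `K^* = {y | ∀ u ∈ K, 0 ≤ ⟪u, y⟫}` its inner dual,
so that `D_* = -K^*`. Pick `y₀` with `Aᵀ y₀ = -c` (`Aᵀ` is onto since `A` is injective); then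
`{y | Aᵀ y = -c} - D_* = y₀ + (ker Aᵀ + K^*)`, and the distance hypothesis says that `-y₀` is
not in the closure of the cone `ker Aᵀ + K^*`. Farkas' lemma gives `w` with `⟪-y₀, w⟫ < 0` that
is nonnegative on this cone. Hence `w ⊥ ker Aᵀ`, i.e. `w = A h`, and `w ∈ K^** = K`; finally
`⟪c, h⟫ = -⟪Aᵀ y₀, h⟫ = ⟪-y₀, A h⟫ < 0`.
-/

open Set Pointwise ProperCone
open scoped InnerProduct

namespace ContinuousLinearMap

variable {𝕜 E F : Type*} [RCLike 𝕜] [NormedAddCommGroup E] [InnerProductSpace 𝕜 E]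
  [NormedAddCommGroup F] [InnerProductSpace 𝕜 F] [CompleteSpace E] [CompleteSpace F]
  [FiniteDimensional 𝕜 E]

theorem range_adjoint (A : E →L[𝕜] F) : A†.range = A.kerᗮ := by
  rw [orthogonal_ker, Submodule.topologicalClosure_eq_self]

theorem orthogonal_ker_adjoint (A : E →L[𝕜] F) : A†.kerᗮ = A.range := by
  rw [← orthogonal_range, Submodule.orthogonal_orthogonal]

theorem adjoint_surjective {A : E →L[𝕜] F} (hA : Function.Injective A) :
    Function.Surjective (A†) := by
  rw [← coe_coe, ← LinearMap.range_eq_top, range_adjoint, LinearMap.ker_eq_bot_of_injective hA,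
    Submodule.bot_orthogonal_eq_top]

end ContinuousLinearMap

namespace ProperCone

variable {E : Type*} [NormedAddCommGroup E] [InnerProductSpace ℝ E] [CompleteSpace E]

theorem exists_mem_orthogonal_innerDual_of_notMem_closure_add
    (V : Submodule ℝ E) (C : ProperCone ℝ E) {x₀ : E}
    (hx₀ : x₀ ∉ closure ((V : Set E) + (C : Set E))) :
    ∃ w ∈ Vᗮ, w ∈ innerDual (C : Set E) ∧ ⟪x₀, w⟫ < 0 := by
  set P : ProperCone ℝ E := Submodule.closure ((V : PointedCone ℝ E) ⊔ C.toPointedCone)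
  have hP : (P : Set E) = closure ((V : Set E) + (C : Set E)) := by
    simp [P, Submodule.coe_sup]
  obtain ⟨w, hwP, hw⟩ := P.hyperplane_separation' fun h => hx₀ (hP ▸ h)
  have hmem : ∀ v ∈ V, ∀ x ∈ C, 0 ≤ ⟪v + x, w⟫ := fun v hv x hx =>
    hwP _ (by rw [← SetLike.mem_coe, hP]; exact subset_closure (add_mem_add hv hx))
  refine ⟨w, fun v hv => le_antisymm ?_ ?_, fun x hx => ?_, hw⟩
  · simpa [inner_neg_left] using hmem (-v) (neg_mem hv) 0 C.zero_mem
  · simpa using hmem v hv 0 C.zero_mem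
  · simpa using hmem 0 V.zero_mem x hx

end ProperCone

section RecessionCone

variable {m : ℕ} {D : Set (EuclideanSpace ℝ (Fin m))}

theorem add_mem_recCone {u v : EuclideanSpace ℝ (Fin m)} (hu : u ∈ recCone D)
    (hv : v ∈ recCone D) : u + v ∈ recCone D := fun z hz t ht => by
  simpa [smul_add, add_assoc] using hv _ (hu z hz t ht) t ht

theorem smul_mem_recCone {u : EuclideanSpace ℝ (Fin m)} (hu : u ∈ recCone D) {s : ℝ}
    (hs : 0 ≤ s) : s • u ∈ recCone D := fun z hz t ht => by
  simpa [mul_smul] using hu z hz (t * s) (mul_nonneg ht hs)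

theorem isClosed_recCone (hD : IsClosed D) : IsClosed (recCone D) := by
  have : recCone D = ⋂ z ∈ D, ⋂ t ∈ Ici (0 : ℝ), (fun u => z + t • u) ⁻¹' D := by
    ext u; simp [recCone]
  rw [this]
  exact isClosed_biInter fun z _ => isClosed_biInter fun t _ => hD.preimage (by fun_prop)

def recProperCone (D : Set (EuclideanSpace ℝ (Fin m))) (hD : IsClosed D) :
    ProperCone ℝ (EuclideanSpace ℝ (Fin m)) where
  carrier := recCone D
  zero_mem' := fun z hz t _ => by simpa using hz
  add_mem' := add_mem_recCone
  smul_mem' := fun s _ hu => smul_mem_recCone hu s.2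
  isClosed' := isClosed_recCone hD

theorem innerDual_innerDual_recCone (hD : IsClosed D) :
    (innerDual (innerDual (recCone D) : Set (EuclideanSpace ℝ (Fin m))) :
      Set (EuclideanSpace ℝ (Fin m))) = recCone D :=
  congrArg SetLike.coe (innerDual_innerDual (recProperCone D hD))

end RecessionCone

theorem zero_notMem_closure_sub_of_setEDist_pos {m : ℕ} {S T : Set (EuclideanSpace ℝ (Fin m))}
    (h : 0 < setEDist S T) : (0 : EuclideanSpace ℝ (Fin m)) ∉ closure (S - T) := by
  rw [Metric.mem_closure_iff_infEDist_zero]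
  refine (h.trans_le (Metric.le_infEDist.2 ?_)).ne'
  rintro _ ⟨s, hs, t, ht, rfl⟩
  calc setEDist S T ≤ edist s t := iInf₂_le_of_le s hs (iInf₂_le t ht)
    _ = edist 0 (s - t) := by rw [edist_comm 0, edist_zero_right, edist_eq_enorm_sub]

theorem stmt5_general {n m : ℕ}
    (A : EuclideanSpace ℝ (Fin n) →L[ℝ] EuclideanSpace ℝ (Fin m))
    (hA : Function.Injective A)
    (D : Set (EuclideanSpace ℝ (Fin m))) (hDclosed : IsClosed D)
    (c : EuclideanSpace ℝ (Fin n))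
    (hdist : 0 < setEDist
      {y : EuclideanSpace ℝ (Fin m) | ContinuousLinearMap.adjoint A y = -c}
      {y : EuclideanSpace ℝ (Fin m) | ∀ u ∈ recCone D, ⟪y, u⟫ ≤ 0}) :
    ∃ h : EuclideanSpace ℝ (Fin n), A h ∈ recCone D ∧ ⟪c, h⟫ < 0 := by
  obtain ⟨y₀, hy₀⟩ := ContinuousLinearMap.adjoint_surjective hA (-c)
  have hsep : -y₀ ∉ closure ((A†.ker : Set (EuclideanSpace ℝ (Fin m))) +
      (innerDual (recCone D) : Set (EuclideanSpace ℝ (Fin m)))) := by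
    refine fun hmem => zero_notMem_closure_sub_of_setEDist_pos hdist ?_
    refine add_neg_cancel y₀ ▸ map_mem_closure (continuous_const_add y₀) hmem ?_
    rintro _ ⟨v, hv, k, hk, rfl⟩
    refine ⟨y₀ + v, ?_, -k, fun u hu => ?_, by simp only [sub_neg_eq_add, add_assoc]⟩
    · simpa [hy₀] using hv
    · simpa [inner_neg_left, real_inner_comm] using hk hu
  obtain ⟨w, hwA, hwK, hw⟩ := exists_mem_orthogonal_innerDual_of_notMem_closure_add _ _ hsep
  rw [ContinuousLinearMap.orthogonal_ker_adjoint] at hwA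
  obtain ⟨h, rfl⟩ := hwA
  refine ⟨h, innerDual_innerDual_recCone hDclosed ▸ hwK, ?_⟩
  simpa [inner_neg_left, ← ContinuousLinearMap.adjoint_inner_left, hy₀] using hw

/-- if `A` is injective, `{x : A x ∈ D}` is nonempty, `D` has
nonempty interior, and `dist({y : Aᵀ y = −c}, D_*) > 0`, then there exists an
unbounded direction `h` with `A h ∈ rec(D)` and `⟨c, h⟩ < 0`. -/
theorem stmt5 {n m : ℕ}
    (A : EuclideanSpace ℝ (Fin n) →L[ℝ] EuclideanSpace ℝ (Fin m))
    (hA : Function.Injective A)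
    (D : Set (EuclideanSpace ℝ (Fin m))) (hDclosed : IsClosed D) (hDconv : Convex ℝ D)
    (hDint : (interior D).Nonempty)
    (hfeas : {x : EuclideanSpace ℝ (Fin n) | A x ∈ D}.Nonempty)
    (c : EuclideanSpace ℝ (Fin n))
    (hdist : 0 < setEDist
      {y : EuclideanSpace ℝ (Fin m) | ContinuousLinearMap.adjoint A y = -c}
      {y : EuclideanSpace ℝ (Fin m) | ∀ u ∈ recCone D, ⟪y, u⟫ ≤ 0}) :
    ∃ h : EuclideanSpace ℝ (Fin n), A h ∈ recCone D ∧ ⟪c, h⟫ < 0 :=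
  stmt5_general A hA D hDclosed c hdist
end

section
/- Let f : ℝⁿ → ℝ be a convex function that is self-concordant. For x, y in the domain of f with r := ‖y − x‖_{f''(x)} (the local norm induced by the Hessian at x), we have ⟨f'(x) − f'(y), y − x⟩ ≤ 0 and moreover ⟨f'(y) − f'(x), y − x⟩ ≥ r²/(1+r). -/
open scoped RealInnerProductSpace


open Set Filter Topology

lemma deriv_nonneg_of_monotoneOn {G : ℝ → ℝ} {U : Set ℝ} (hU : IsOpen U)
    (hm : MonotoneOn G U) {t d : ℝ} (ht : t ∈ U) (hd : HasDerivAt G d t) : 0 ≤ d := by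
  have hslope : Tendsto (slope G t) (𝓝[>] t) (𝓝 d) :=
    (hasDerivAt_iff_tendsto_slope.1 hd).mono_left
      (nhdsWithin_mono _ fun u hu => ne_of_gt hu)
  refine ge_of_tendsto hslope ?_
  filter_upwards [self_mem_nhdsWithin, mem_nhdsWithin_of_mem_nhds (hU.mem_nhds ht)]
    with u hu huU
  rw [slope_def_field]
  exact div_nonneg (sub_nonneg.2 (hm ht huU (le_of_lt hu))) (sub_nonneg.2 (le_of_lt hu))

lemma ode_bound {G ψ χ : ℝ → ℝ} {U : Set ℝ} (hIcc : Icc (0:ℝ) 1 ⊆ U)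
    (hG : ∀ t ∈ U, HasDerivAt G (ψ t) t)
    (hψd : ∀ t ∈ U, HasDerivAt ψ (χ t) t)
    (hψ0 : ∀ t ∈ U, 0 ≤ ψ t)
    (hχ : ∀ t ∈ U, |χ t| ≤ 2 * ψ t ^ ((3:ℝ)/2))
    {r : ℝ} (hr0 : 0 ≤ r) (hr : r ^ 2 = ψ 0) :
    r ^ 2 / (1 + r) ≤ G 1 - G 0 := by
  have h01 : (0:ℝ) ∈ Icc (0:ℝ) 1 := ⟨le_refl _, by norm_num⟩
  have h11 : (1:ℝ) ∈ Icc (0:ℝ) 1 := ⟨by norm_num, le_refl _⟩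
  have hGmono : MonotoneOn G (Icc 0 1) := by
    apply monotoneOn_of_deriv_nonneg (convex_Icc 0 1)
    · exact fun t ht => (hG t (hIcc ht)).continuousAt.continuousWithinAt
    · rw [interior_Icc]
      exact fun t ht =>
        (hG t (hIcc (Ioo_subset_Icc_self ht))).differentiableAt.differentiableWithinAt
    · rw [interior_Icc]
      intro t ht
      rw [(hG t (hIcc (Ioo_subset_Icc_self ht))).deriv]
      exact hψ0 t (hIcc (Ioo_subset_Icc_self ht))
  have hG01 : G 0 ≤ G 1 := hGmono h01 h11 zero_le_one
  rcases eq_or_lt_of_le hr0 with h0 | hrpos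
  · rw [← h0]
    norm_num
    linarith
  -- main case : r > 0
  have key : ∀ ε : ℝ, 0 < ε →
      Real.sqrt (r^2+ε) - ((Real.sqrt (r^2+ε))⁻¹ + 1)⁻¹ - ε ≤ G 1 - G 0 := by
    intro ε hε
    set a : ℝ := (Real.sqrt (r^2+ε))⁻¹ with ha
    have hsq : 0 < Real.sqrt (r^2+ε) := Real.sqrt_pos.2 (by positivity)
    have hapos : 0 < a := by positivity
    have hu : ∀ t ∈ U, 0 < ψ t + ε := fun t ht => by have := hψ0 t ht; linarith
    have hχ' : ∀ t ∈ U, -(2 * (ψ t + ε) * Real.sqrt (ψ t + ε)) ≤ χ t := by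
      intro t ht
      have h1 := hχ t ht
      have h2 : ψ t ^ ((3:ℝ)/2) = ψ t * Real.sqrt (ψ t) := by
        rw [show ((3:ℝ)/2) = (1:ℝ) + 1/2 by norm_num,
          Real.rpow_add' (hψ0 t ht) (by norm_num), Real.rpow_one,
          Real.sqrt_eq_rpow]
      have s1 : Real.sqrt (ψ t) ≤ Real.sqrt (ψ t + ε) := Real.sqrt_le_sqrt (by linarith)
      have s0 : 0 ≤ Real.sqrt (ψ t) := Real.sqrt_nonneg _
      have s2 : ψ t * Real.sqrt (ψ t) ≤ (ψ t + ε) * Real.sqrt (ψ t + ε) :=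
        mul_le_mul (by linarith) s1 s0 (by linarith [hu t ht, Real.sqrt_nonneg (ψ t + ε)])
      have := neg_abs_le (χ t)
      rw [h2] at h1
      nlinarith [abs_nonneg (χ t)]
    -- antitone auxiliary function
    have hw : ∀ t ∈ U, HasDerivAt (fun u => (Real.sqrt (ψ u + ε))⁻¹ - u)
        (-(1 / (2 * Real.sqrt (ψ t + ε)) * χ t) / Real.sqrt (ψ t + ε) ^ 2 - 1) t := by
      intro t ht
      have h1 : HasDerivAt (fun u => ψ u + ε) (χ t) t := (hψd t ht).add_const ε
      have h2 : HasDerivAt (fun u => Real.sqrt (ψ u + ε))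
          (1 / (2 * Real.sqrt (ψ t + ε)) * χ t) t :=
        (Real.hasDerivAt_sqrt (ne_of_gt (hu t ht))).comp t h1
      have h3 := h2.inv (ne_of_gt (Real.sqrt_pos.2 (hu t ht)))
      exact h3.sub (hasDerivAt_id t)
    have hwnonpos : ∀ t ∈ U,
        -(1 / (2 * Real.sqrt (ψ t + ε)) * χ t) / Real.sqrt (ψ t + ε) ^ 2 - 1 ≤ 0 := by
      intro t ht
      have hut : 0 < ψ t + ε := hu t ht
      have hst : 0 < Real.sqrt (ψ t + ε) := Real.sqrt_pos.2 hut
      have hsq2 : Real.sqrt (ψ t + ε) ^ 2 = ψ t + ε := Real.sq_sqrt hut.le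
      have hc := hχ' t ht
      rw [sub_nonpos, hsq2, div_le_one hut]
      have e : -(1 / (2 * Real.sqrt (ψ t + ε)) * χ t) = (-(χ t)) / (2 * Real.sqrt (ψ t + ε)) := by
        ring
      rw [e, div_le_iff₀ (by positivity)]
      nlinarith [hst, hut]
    have hanti : AntitoneOn (fun u => (Real.sqrt (ψ u + ε))⁻¹ - u) (Icc 0 1) := by
      apply antitoneOn_of_deriv_nonpos (convex_Icc 0 1)
      · exact fun t ht => (hw t (hIcc ht)).continuousAt.continuousWithinAt
      · rw [interior_Icc]
        exact fun t ht =>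
          (hw t (hIcc (Ioo_subset_Icc_self ht))).differentiableAt.differentiableWithinAt
      · rw [interior_Icc]
        intro t ht
        rw [(hw t (hIcc (Ioo_subset_Icc_self ht))).deriv]
        exact hwnonpos t (hIcc (Ioo_subset_Icc_self ht))
    have hlow : ∀ t ∈ Icc (0:ℝ) 1, ((a + t)^2)⁻¹ - ε ≤ ψ t := by
      intro t ht
      have h1 := hanti h01 ht ht.1
      have hψ0e : ψ 0 + ε = r^2 + ε := by rw [← hr]
      simp only [hψ0e, sub_zero] at h1
      have h2 : (Real.sqrt (ψ t + ε))⁻¹ ≤ a + t := by linarith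
      have hut : 0 < ψ t + ε := hu t (hIcc ht)
      have hst : 0 < Real.sqrt (ψ t + ε) := Real.sqrt_pos.2 hut
      have hat : 0 < a + t := by have := ht.1; linarith
      have h3 : (a + t)⁻¹ ≤ Real.sqrt (ψ t + ε) := by
        rw [inv_le_comm₀ hat hst]
        exact h2
      have h4 : ((a + t)⁻¹)^2 ≤ Real.sqrt (ψ t + ε) ^ 2 :=
        pow_le_pow_left₀ (by positivity) h3 2
      rw [Real.sq_sqrt hut.le] at h4
      rw [← inv_pow] at *
      linarith
    -- monotone F
    have hF : ∀ t ∈ Icc (0:ℝ) 1, HasDerivAt (fun u => G u + (a + u)⁻¹ + ε * u)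
        (ψ t + -1 / (a + t) ^ 2 + ε * 1) t := by
      intro t ht
      have hat : a + t ≠ 0 := by have := ht.1; positivity
      exact ((hG t (hIcc ht)).add
        (((hasDerivAt_id t).const_add a).inv hat)).add ((hasDerivAt_id t).const_mul ε)
    have hFmono : MonotoneOn (fun u => G u + (a + u)⁻¹ + ε * u) (Icc 0 1) := by
      apply monotoneOn_of_deriv_nonneg (convex_Icc 0 1)
      · exact fun t ht => (hF t ht).continuousAt.continuousWithinAt
      · rw [interior_Icc]
        exact fun t ht =>
          (hF t (Ioo_subset_Icc_self ht)).differentiableAt.differentiableWithinAt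
      · rw [interior_Icc]
        intro t ht
        rw [(hF t (Ioo_subset_Icc_self ht)).deriv]
        have := hlow t (Ioo_subset_Icc_self ht)
        have : ((a + t)^2)⁻¹ - ε ≤ ψ t := this
        have he : -1 / (a + t)^2 = -(((a + t)^2)⁻¹) := by ring
        rw [he]
        linarith
    have hF01 := hFmono h01 h11 zero_le_one
    simp only [add_zero, mul_zero, mul_one] at hF01
    have hainv : a⁻¹ = Real.sqrt (r^2 + ε) := by rw [ha, inv_inv]
    have : G 0 + a⁻¹ ≤ G 1 + (a + 1)⁻¹ + ε := by linarith [hF01]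
    rw [hainv] at this
    linarith
  -- pass to the limit ε → 0⁺
  have hr2 : Real.sqrt (r ^ 2) = r := Real.sqrt_sq hr0
  have hc1 : ContinuousAt (fun ε : ℝ => Real.sqrt (r^2+ε)) 0 :=
    (Real.continuous_sqrt.comp (continuous_const.add continuous_id)).continuousAt
  have hval1 : (fun ε : ℝ => Real.sqrt (r^2+ε)) 0 = r := by simp [hr2]
  have hc2 : ContinuousAt (fun ε : ℝ => (Real.sqrt (r^2+ε))⁻¹) 0 := by
    apply hc1.inv₀
    rw [add_zero, hr2]
    exact ne_of_gt hrpos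
  have hc3 : ContinuousAt (fun ε : ℝ => ((Real.sqrt (r^2+ε))⁻¹ + 1)⁻¹) 0 := by
    apply (hc2.add continuousAt_const).inv₀
    show (Real.sqrt (r^2+0))⁻¹ + 1 ≠ 0
    rw [add_zero, hr2]
    positivity
  have hC : ContinuousAt
      (fun ε : ℝ => Real.sqrt (r^2+ε) - ((Real.sqrt (r^2+ε))⁻¹ + 1)⁻¹ - ε) 0 :=
    (hc1.sub hc3).sub continuousAt_id
  have hvalue : Real.sqrt (r^2+0) - ((Real.sqrt (r^2+0))⁻¹ + 1)⁻¹ - 0 = r^2/(1+r) := by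
    rw [add_zero, hr2]
    have h1r : (0:ℝ) < 1 + r := by linarith
    field_simp
    ring
  have hlim : Tendsto (fun ε : ℝ => Real.sqrt (r^2+ε) - ((Real.sqrt (r^2+ε))⁻¹ + 1)⁻¹ - ε)
      (𝓝[>] (0:ℝ)) (𝓝 (r^2/(1+r))) := by
    rw [← hvalue]
    exact (hC.tendsto).mono_left nhdsWithin_le_nhds
  exact le_of_tendsto hlim (Filter.eventually_of_mem self_mem_nhdsWithin fun ε hε => key ε hε)

open scoped RealInnerProductSpace

/-- for a self-concordant convex function `f` on an open convex set
`s` and `x, y ∈ s`, with `r = ‖y − x‖_{f''(x)}` the local norm of `y − x`,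
we have `⟨∇f(x) − ∇f(y), y − x⟩ ≤ 0` and
`⟨∇f(y) − ∇f(x), y − x⟩ ≥ r² / (1 + r)`. -/
theorem stmt7 {n : ℕ} (s : Set (EuclideanSpace ℝ (Fin n)))
    (hs : IsOpen s) (hsconv : Convex ℝ s)
    (f : EuclideanSpace ℝ (Fin n) → ℝ)
    (hf : ContDiffOn ℝ 3 f s)
    (hfconv : ConvexOn ℝ s f)
    (hsc : ∀ x ∈ s, ∀ h : EuclideanSpace ℝ (Fin n),
      |iteratedFDerivWithin ℝ 3 f s x ![h, h, h]|
        ≤ 2 * (iteratedFDerivWithin ℝ 2 f s x ![h, h]) ^ ((3 : ℝ) / 2))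
    (x y : EuclideanSpace ℝ (Fin n)) (hx : x ∈ s) (hy : y ∈ s)
    (r : ℝ) (hr : r = Real.sqrt (iteratedFDerivWithin ℝ 2 f s x ![y - x, y - x])) :
    ⟪gradient f x - gradient f y, y - x⟫ ≤ 0 ∧
      r ^ 2 / (1 + r) ≤ ⟪gradient f y - gradient f x, y - x⟫ := by
  classical
  set v : EuclideanSpace ℝ (Fin n) := y - x with hv
  set c : ℝ → EuclideanSpace ℝ (Fin n) := fun t => AffineMap.lineMap x y t with hcdef
  have hcapp : ∀ t : ℝ, c t = x + t • v := by
    intro t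
    show AffineMap.lineMap x y t = x + t • v
    rw [AffineMap.lineMap_apply_module', hv]
    abel
  have hc0 : c 0 = x := by rw [hcapp]; simp
  have hc1 : c 1 = y := by rw [hcapp, one_smul, hv]; abel
  set U : Set ℝ := c ⁻¹' s with hUdef
  have hcont : Continuous c := by
    have : Continuous fun t : ℝ => x + t • v := by continuity
    rw [show c = fun t : ℝ => x + t • v from funext hcapp]
    exact this
  have hUopen : IsOpen U := hs.preimage hcont
  have hIccU : Set.Icc (0:ℝ) 1 ⊆ U := fun t ht => by
    show c t ∈ s
    exact hsconv.lineMap_mem hx hy ht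
  have hdiffk : ∀ k : ℕ, k < 3 → ∀ z ∈ s,
      DifferentiableAt ℝ (iteratedFDeriv ℝ k f) z := by
    intro k hk z hz
    have h1 : DifferentiableWithinAt ℝ (iteratedFDerivWithin ℝ k f s) s z :=
      hf.differentiableOn_iteratedFDerivWithin (by exact_mod_cast hk) hs.uniqueDiffOn z hz
    have h2 := h1.differentiableAt (hs.mem_nhds hz)
    have heq : iteratedFDeriv ℝ k f =ᶠ[nhds z] iteratedFDerivWithin ℝ k f s :=
      Filter.eventuallyEq_of_mem (hs.mem_nhds hz) fun w hw =>
        (iteratedFDerivWithin_of_isOpen k hs hw).symm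
    exact heq.differentiableAt_iff.2 h2
  have hdf : ∀ z ∈ s, DifferentiableAt ℝ f z := fun z hz =>
    ((hf.differentiableOn (by norm_num)) z hz).differentiableAt (hs.mem_nhds hz)
  set G : ℝ → ℝ := fun t => iteratedFDeriv ℝ 1 f (c t) ![v] with hGdef
  set ψ : ℝ → ℝ := fun t => iteratedFDeriv ℝ 2 f (c t) ![v, v] with hψdef
  set χ : ℝ → ℝ := fun t => iteratedFDeriv ℝ 3 f (c t) ![v, v, v] with hχdef
  have hcd : ∀ t : ℝ, HasDerivAt c v t := by
    intro t
    have h1 : HasDerivAt (fun u : ℝ => x + u • v) ((1:ℝ) • v) t :=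
      ((hasDerivAt_id t).smul_const v).const_add x
    rw [one_smul] at h1
    rw [show c = fun t : ℝ => x + t • v from funext hcapp]
    exact h1
  have htail2 : Fin.tail ![v, v] = ![v] := by
    ext i
    fin_cases i
    rfl
  have htail3 : Fin.tail ![v, v, v] = ![v, v] := by
    ext i
    fin_cases i <;> rfl
  have hstep : ∀ (k : ℕ), k < 3 → ∀ (w : Fin k → EuclideanSpace ℝ (Fin n)),
      ∀ t ∈ U, HasDerivAt (fun u => iteratedFDeriv ℝ k f (c u) w)
        ((fderiv ℝ (iteratedFDeriv ℝ k f) (c t) v) w) t := by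
    intro k hk w t ht
    have hd := hdiffk k hk (c t) ht
    have h1 : HasDerivAt (fun u => iteratedFDeriv ℝ k f (c u))
        (fderiv ℝ (iteratedFDeriv ℝ k f) (c t) v) t :=
      hd.hasFDerivAt.comp_hasDerivAt t (hcd t)
    have h2 := ((ContinuousMultilinearMap.apply ℝ
        (fun _ : Fin k => EuclideanSpace ℝ (Fin n)) ℝ w).hasFDerivAt).comp_hasDerivAt t h1
    exact h2
  have hG' : ∀ t ∈ U, HasDerivAt G (ψ t) t := by
    intro t ht
    have h2 := hstep 1 (by norm_num) ![v] t ht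
    convert h2 using 1
    show iteratedFDeriv ℝ 2 f (c t) ![v, v] = _
    rw [iteratedFDeriv_succ_apply_left, htail2]
    rfl
  have hψ' : ∀ t ∈ U, HasDerivAt ψ (χ t) t := by
    intro t ht
    have h2 := hstep 2 (by norm_num) ![v, v] t ht
    convert h2 using 1
    show iteratedFDeriv ℝ 3 f (c t) ![v, v, v] = _
    rw [iteratedFDeriv_succ_apply_left, htail3]
    rfl
  have hconvU : ConvexOn ℝ U (f ∘ c) := hfconv.comp_affineMap (AffineMap.lineMap x y)
  have hkd : ∀ t ∈ U, HasDerivAt (f ∘ c) (G t) t := by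
    intro t ht
    have h1 := (hdf (c t) ht).hasFDerivAt.comp_hasDerivAt t (hcd t)
    convert h1 using 1
    show iteratedFDeriv ℝ 1 f (c t) ![v] = _
    rw [iteratedFDeriv_one_apply]
    rfl
    rfl
    rfl
  have hGmonoU : MonotoneOn G U := by
    have hm := hconvU.monotoneOn_deriv (fun t ht => (hkd t ht).differentiableAt)
    intro a ha b hb hab
    have h := hm ha hb hab
    rwa [(hkd a ha).deriv, (hkd b hb).deriv] at h
  have hψnn : ∀ t ∈ U, 0 ≤ ψ t := fun t ht =>
    deriv_nonneg_of_monotoneOn hUopen hGmonoU ht (hG' t ht)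
  have hEq2 : ∀ z ∈ s, iteratedFDerivWithin ℝ 2 f s z = iteratedFDeriv ℝ 2 f z :=
    fun z hz => iteratedFDerivWithin_of_isOpen 2 hs hz
  have hEq3 : ∀ z ∈ s, iteratedFDerivWithin ℝ 3 f s z = iteratedFDeriv ℝ 3 f z :=
    fun z hz => iteratedFDerivWithin_of_isOpen 3 hs hz
  have hχb : ∀ t ∈ U, |χ t| ≤ 2 * ψ t ^ ((3:ℝ)/2) := by
    intro t ht
    have h := hsc (c t) ht v
    rwa [hEq3 _ ht, hEq2 _ ht] at h
  have h0U : (0:ℝ) ∈ U := hIccU ⟨le_refl _, by norm_num⟩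
  have hrψ : r = Real.sqrt (ψ 0) := by
    rw [hr, hEq2 x hx]
    show Real.sqrt (iteratedFDeriv ℝ 2 f x ![v, v]) = _
    rw [show ψ 0 = iteratedFDeriv ℝ 2 f (c 0) ![v, v] from rfl, hc0]
  have hr0' : 0 ≤ r := by rw [hrψ]; exact Real.sqrt_nonneg _
  have hr2 : r ^ 2 = ψ 0 := by rw [hrψ]; exact Real.sq_sqrt (hψnn 0 h0U)
  have main : r ^ 2 / (1 + r) ≤ G 1 - G 0 :=
    ode_bound hIccU hG' hψ' hψnn hχb hr0' hr2
  have hgrad : ∀ z ∈ s, ⟪gradient f z, v⟫ = iteratedFDeriv ℝ 1 f z ![v] := by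
    intro z hz
    have h1 : HasFDerivAt f (InnerProductSpace.toDual ℝ _ (gradient f z)) z :=
      ((hdf z hz).hasGradientAt).hasFDerivAt
    rw [iteratedFDeriv_one_apply, h1.fderiv]
    simp [InnerProductSpace.toDual_apply_apply]
  have hQ : ⟪gradient f y - gradient f x, v⟫ = G 1 - G 0 := by
    rw [inner_sub_left, hgrad y hy, hgrad x hx]
    rw [show G 1 = iteratedFDeriv ℝ 1 f (c 1) ![v] from rfl,
      show G 0 = iteratedFDeriv ℝ 1 f (c 0) ![v] from rfl, hc0, hc1]
  have hpos : 0 ≤ r ^ 2 / (1 + r) := div_nonneg (sq_nonneg r) (by linarith)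
  constructor
  · have he : ⟪gradient f x - gradient f y, v⟫ = -(G 1 - G 0) := by
      rw [← hQ, inner_sub_left, inner_sub_left]
      ring
    rw [he]
    linarith
  · rw [hQ]
    exact main
end

section
/- Let ξ > 1, κ ≥ 0 with ξ − 1 − κ > 0. Suppose positive reals τ, τ̄, μ, μ̄ satisfy μ τ̄² + μ̄ τ² ≤ (ξ/(ξ−1−κ)) τ τ̄ (μ + μ̄), with τ̄ = 1 and μ̄ ≤ 1 ≤ μ. Then τ ≥ (ξ−1−κ)/(2ξ). -/
/-- Corollary 7.1, lower bound on `τ`. -/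
theorem stmt10 (ξ κ μ μ' τ τ' : ℝ)
    (hξ : 1 < ξ) (hκ : 0 ≤ κ) (hξκ : 0 < ξ - 1 - κ)
    (hμ : 0 < μ) (hμ' : 0 < μ') (hτ : 0 < τ) (hτ' : 0 < τ')
    (hineq : μ * τ' ^ 2 + μ' * τ ^ 2 ≤ (ξ / (ξ - 1 - κ)) * (τ * τ' * (μ + μ')))
    (hτ'1 : τ' = 1) (hμ'1 : μ' ≤ 1) (hμ1 : 1 ≤ μ) :
    (ξ - 1 - κ) / (2 * ξ) ≤ τ := by
  subst hτ'1
  have hξ0 : (0:ℝ) < ξ := by linarith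
  rw [div_le_iff₀ (by positivity)]
  rw [div_mul_eq_mul_div, le_div_iff₀ hξκ] at hineq
  nlinarith [mul_nonneg hμ'.le (sq_nonneg τ), mul_nonneg hξκ.le (sub_nonneg.2 hμ'1),
    mul_nonneg (mul_nonneg hξκ.le hτ.le) (sub_nonneg.2 hμ'1)]
end

section
/- Let A : ℝⁿ → ℝᵐ be a linear map, D ⊆ ℝᵐ closed convex with rec(D) having nonempty interior intersecting range(A) (strict unboundedness direction exists: ∃ h with A h ∈ int(rec D)), let D_* := {y : ⟨y,u⟩ ≤ 0 ∀ u ∈ rec D}, c ∈ ℝⁿ, y⁰ ∈ ℝᵐ, and 0 < t₁ < t₂ < ∞. Then the set { y ∈ D_* : ∃ τ ∈ (t₁, t₂), Aᵀ y = Aᵀ y⁰ − (τ−1)·c } is bounded. -/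
open scoped RealInnerProductSpace

/-- Lemma 8.2: under strict unboundedness (`∃ h, A h ∈ int(rec D)`),
the set of dual feasible `y ∈ D_*` corresponding to `τ ∈ (t₁, t₂)` is bounded. -/
theorem stmt13 {n m : ℕ}
    (A : EuclideanSpace ℝ (Fin n) →L[ℝ] EuclideanSpace ℝ (Fin m))
    (D : Set (EuclideanSpace ℝ (Fin m))) (hDclosed : IsClosed D) (hDconv : Convex ℝ D)
    (hstrict : ∃ h : EuclideanSpace ℝ (Fin n), A h ∈ interior (recCone D))
    (c : EuclideanSpace ℝ (Fin n)) (y0 : EuclideanSpace ℝ (Fin m))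
    (t₁ t₂ : ℝ) (ht₁ : 0 < t₁) (ht₁₂ : t₁ < t₂) :
    Bornology.IsBounded {y : EuclideanSpace ℝ (Fin m) |
      (∀ u ∈ recCone D, ⟪y, u⟫ ≤ 0) ∧
      ∃ τ ∈ Set.Ioo t₁ t₂,
        ContinuousLinearMap.adjoint A y
          = ContinuousLinearMap.adjoint A y0 - (τ - 1) • c} := by
  obtain ⟨h, hh⟩ := hstrict
  rw [mem_interior_iff_mem_nhds, Metric.mem_nhds_iff] at hh
  obtain ⟨ε, hε, hball⟩ := hh
  set M : ℝ := (‖ContinuousLinearMap.adjoint A y0‖ + (t₂ + 1) * ‖c‖) * ‖h‖ with hM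
  have ht2 : (0:ℝ) < t₂ := ht₁.trans ht₁₂
  have hM0 : 0 ≤ M := by
    apply mul_nonneg _ (norm_nonneg _)
    have h1 : 0 ≤ (t₂ + 1) * ‖c‖ := mul_nonneg (by linarith) (norm_nonneg _)
    linarith [norm_nonneg (ContinuousLinearMap.adjoint A y0)]
  rw [isBounded_iff_forall_norm_le]
  refine ⟨2 * M / ε, ?_⟩
  rintro y ⟨hy1, τ, hτ, hy2⟩
  rcases eq_or_ne y 0 with rfl | hy0
  · simp; positivity
  · have hny : 0 < ‖y‖ := norm_pos_iff.mpr hy0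
    -- the point A h + (ε/2) • (‖y‖⁻¹ • y) lies in recCone D
    have hu : A h + (ε / 2) • (‖y‖⁻¹ • y) ∈ recCone D := by
      apply hball
      rw [Metric.mem_ball, dist_eq_norm]
      have : A h + (ε / 2) • (‖y‖⁻¹ • y) - A h = (ε / 2) • (‖y‖⁻¹ • y) := by abel
      rw [this, norm_smul, norm_smul, norm_inv, norm_norm,
        inv_mul_cancel₀ (ne_of_gt hny)]
      simp [abs_of_pos hε]
      linarith
    have key := hy1 _ hu
    rw [inner_add_right, inner_smul_right, inner_smul_right,
      real_inner_self_eq_norm_sq] at key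
    -- so ⟪y, A h⟫ ≤ - (ε/2) ‖y‖
    have h1 : ⟪y, A h⟫ ≤ -(ε / 2) * ‖y‖ := by
      have : ‖y‖⁻¹ * ‖y‖ ^ 2 = ‖y‖ := by
        field_simp
      nlinarith [key, this]
    -- and ⟪y, A h⟫ = ⟪Aᵀ y, h⟫ ≥ -M
    have h2 : -M ≤ ⟪y, A h⟫ := by
      have hadj : ⟪ContinuousLinearMap.adjoint A y, h⟫ = ⟪y, A h⟫ :=
        ContinuousLinearMap.adjoint_inner_left A h y
      have hnorm : ‖ContinuousLinearMap.adjoint A y‖ ≤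
          ‖ContinuousLinearMap.adjoint A y0‖ + (t₂ + 1) * ‖c‖ := by
        rw [hy2]
        refine le_trans (norm_sub_le _ _) ?_
        gcongr
        rw [norm_smul]
        gcongr
        have : |τ - 1| ≤ |τ| + 1 := by
          calc |τ - 1| ≤ |τ| + |(1:ℝ)| := abs_sub _ _
          _ = |τ| + 1 := by norm_num
        refine this.trans ?_
        have hτ2 : τ < t₂ := hτ.2
        have hτ1 : 0 < τ := lt_trans ht₁ hτ.1
        rw [abs_of_pos hτ1]
        linarith
      calc -M ≤ -(‖ContinuousLinearMap.adjoint A y‖ * ‖h‖) := by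
              rw [hM]; simp only [neg_le_neg_iff]
              gcongr
        _ ≤ ⟪ContinuousLinearMap.adjoint A y, h⟫ := by
              have := abs_real_inner_le_norm (ContinuousLinearMap.adjoint A y) h
              linarith [neg_abs_le ⟪ContinuousLinearMap.adjoint A y, h⟫]
        _ = ⟪y, A h⟫ := hadj
    -- conclude
    have : (ε / 2) * ‖y‖ ≤ M := by linarith
    rw [div_mul_eq_mul_div, le_div_iff₀ hε] at *
    nlinarith
end

section
/- Let D ⊆ ℝᵐ be closed convex with z⁰ ∈ int D, and suppose there exists ŷ ∈ int D_* with Aᵀ ŷ = 0 and δ_*(ŷ|D) = −1 (strict infeasibility), where D_* := {y : ⟨y,h⟩ ≤ 0 ∀ h ∈ rec D} and A is injective. If there exists z ∈ int D with Aᵀ Φ'(z) = 0 for a self-concordant barrier Φ on int D, then every h with A h ∈ rec(D) satisfies A h = 0, hence h = 0; consequently rec(D) ∩ range(A) = {0}. -/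
open scoped RealInnerProductSpace

/-- key step of Lemma 8.1: under strict infeasibility, if
`z ∈ int D` satisfies `Aᵀ Φ'(z) = 0`, then every `h` with `A h ∈ rec(D)` is `0`;
hence `rec(D) ∩ range(A) = {0}`. Here `g = Φ'(z)` is the barrier gradient and
`H = Φ''(z)` its (positive definite) Hessian, with the self-concordant barrier
inequality `⟨g, u⟩ ≥ ⟨u, H u⟩^{1/2}` for recession directions `u`. -/
theorem stmt16 {n m : ℕ}
    (A : EuclideanSpace ℝ (Fin n) →L[ℝ] EuclideanSpace ℝ (Fin m))
    (hA : Function.Injective A)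
    (D : Set (EuclideanSpace ℝ (Fin m))) (hDclosed : IsClosed D) (hDconv : Convex ℝ D)
    (z0 : EuclideanSpace ℝ (Fin m)) (hz0 : z0 ∈ interior D)
    -- strict infeasibility certificate:
    (yhat : EuclideanSpace ℝ (Fin m))
    (hyhat : yhat ∈ interior {y : EuclideanSpace ℝ (Fin m) | ∀ u ∈ recCone D, ⟪y, u⟫ ≤ 0})
    (hAyhat : ContinuousLinearMap.adjoint A yhat = 0)
    (hsup : sSup ((fun z => ⟪yhat, z⟫) '' D) = -1)
    -- a point `z ∈ int D` with barrier gradient `g` and Hessian `H`: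
    (z : EuclideanSpace ℝ (Fin m)) (hz : z ∈ interior D)
    (g : EuclideanSpace ℝ (Fin m))
    (H : EuclideanSpace ℝ (Fin m) →L[ℝ] EuclideanSpace ℝ (Fin m))
    (hHpos : ∀ u : EuclideanSpace ℝ (Fin m), u ≠ 0 → 0 < ⟪u, H u⟫)
    (hbar : ∀ u ∈ recCone D, Real.sqrt ⟪u, H u⟫ ≤ ⟪g, u⟫)
    (hAg : ContinuousLinearMap.adjoint A g = 0) :
    (∀ h : EuclideanSpace ℝ (Fin n), A h ∈ recCone D → A h = 0 ∧ h = 0) ∧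
      recCone D ∩ Set.range A = {0} := by
  have key : ∀ h : EuclideanSpace ℝ (Fin n), A h ∈ recCone D → A h = 0 ∧ h = 0 := by
    intro h hh
    have hg : ⟪g, A h⟫ = 0 := by
      have := ContinuousLinearMap.adjoint_inner_left A h g
      rw [hAg] at this
      simpa using this.symm
    have hle := hbar (A h) hh
    rw [hg] at hle
    have hAh : A h = 0 := by
      by_contra hne
      have hpos := hHpos (A h) hne
      have : (0:ℝ) < Real.sqrt ⟪A h, H (A h)⟫ := Real.sqrt_pos.mpr hpos
      linarith
    refine ⟨hAh, hA ?_⟩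
    simpa using hAh
  refine ⟨key, ?_⟩
  ext x
  simp only [Set.mem_inter_iff, Set.mem_range, Set.mem_singleton_iff]
  constructor
  · rintro ⟨hx, h, rfl⟩
    exact (key h hx).1
  · rintro rfl
    exact ⟨fun w hw t ht => by simpa using hw, 0, map_zero A⟩
end
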